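/- Let M be a positive integer, q > 1 a real number, and let (α_i) be an arbitrary expansion of 1 (i.e., a sequence with digits in {0,...,M} and Σ α_i q^{−i} = 1). If a sequence (a_i) with digits in {0,...,M} satisfies a_{n+1}a_{n+2}... ≤ α_1α_2... (lexicographically) whenever a_n < M, then Σ_{i≥n+1} a_i q^{−i} ≤ q^{−n} whenever a_n < M. -/

import Mathlib

/-!
Write `T n = ∑_{i ≥ 1} a_{n+i} q^{-i}`. If `a_n < M` and the tail of `a` after position `n` is `α`,
then `T n = 1`. Otherwise the tail first drops below `α` at some position `n + m + 1`, so that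
`a_{n+m+1} < α_{m+1} ≤ M`, and comparing with the expansion `α` of `1` digit by digit gives
`T n - 1 ≤ q^{-(m+1)} (T (n+m+1) - 1)`. So the supremum `s` of `T n - 1` over all `n` with
`a_n < M` satisfies `s ≤ max 0 (s / q)`, whence `s ≤ 0`.
-/

/-- Strict lexicographic order on digit sequences (indexed from 0). -/
def LexLt (a b : ℕ → ℕ) : Prop :=
  ∃ n, (∀ k, k < n → a k = b k) ∧ a n < b n

def LexLe (a b : ℕ → ℕ) : Prop :=
  LexLt a b ∨ a = b

open Finset

/-- `∑_{i ≥ 1} c_i q^{-i}`, with the digit `c_i` stored at index `i - 1`. -/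
noncomputable def digitValue (q : ℝ) (c : ℕ → ℕ) : ℝ :=
  ∑' i, (c i : ℝ) / q ^ (i + 1)

section DigitValue

variable {q : ℝ} {M : ℕ} {c d : ℕ → ℕ}

lemma summable_digit_div_pow (hq : 1 < q) (hc : ∀ i, c i ≤ M) :
    Summable (fun i => (c i : ℝ) / q ^ (i + 1)) := by
  have hq0 : 0 < q := zero_lt_one.trans hq
  have hgeo : Summable (fun i : ℕ => (M / q : ℝ) * q⁻¹ ^ i) :=
    (summable_geometric_of_lt_one (by positivity) (inv_lt_one_of_one_lt₀ hq)).mul_left _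
  refine hgeo.of_nonneg_of_le (fun i => by positivity) fun i => ?_
  rw [inv_pow, pow_succ', ← div_div, div_eq_mul_inv _ (q ^ i)]
  gcongr
  exact_mod_cast hc i

lemma digitValue_mono (hq : 1 < q) (hd : ∀ i, d i ≤ M) (hcd : ∀ i, c i ≤ d i) :
    digitValue q c ≤ digitValue q d := by
  have hq0 : 0 < q := zero_lt_one.trans hq
  refine Summable.tsum_le_tsum (fun i => ?_)
    (summable_digit_div_pow hq fun i => (hcd i).trans (hd i)) (summable_digit_div_pow hq hd)
  gcongr
  exact_mod_cast hcd i

lemma sum_range_le_digitValue (hq : 1 < q) (hc : ∀ i, c i ≤ M) (m : ℕ) :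
    ∑ i ∈ range m, (c i : ℝ) / q ^ (i + 1) ≤ digitValue q c := by
  have hq0 : 0 < q := zero_lt_one.trans hq
  exact (summable_digit_div_pow hq hc).sum_le_tsum _ fun i _ => by positivity

lemma digitValue_eq_sum_range_add (hq : 1 < q) (hc : ∀ i, c i ≤ M) (m : ℕ) :
    digitValue q c =
      ∑ i ∈ range m, (c i : ℝ) / q ^ (i + 1) + digitValue q (fun i => c (m + i)) / q ^ m := by
  rw [digitValue, ← (summable_digit_div_pow hq hc).sum_add_tsum_nat_add m, digitValue,
    ← tsum_div_const]
  congr 2 with i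
  rw [add_comm i m, div_div, ← pow_add]
  ring_nf

lemma tsum_tail_eq_digitValue_div (c : ℕ → ℕ) (k : ℕ) :
    ∑' i, (c (k + i) : ℝ) / q ^ (k + i + 1) = digitValue q (fun i => c (k + i)) / q ^ k := by
  rw [digitValue, ← tsum_div_const]
  congr 1 with i
  rw [add_assoc, pow_add, mul_comm, div_div]

lemma digitValue_sub_le_of_lt_of_eq (hq : 1 < q) (hc : ∀ i, c i ≤ M) (hd : ∀ i, d i ≤ M)
    {m : ℕ} (hpre : ∀ k < m, c k = d k) (hm : c m < d m) :
    digitValue q c - digitValue q d ≤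
      (digitValue q (fun i => c (m + 1 + i)) - 1) / q ^ (m + 1) := by
  have hq0 : 0 < q := zero_lt_one.trans hq
  have hprefix : ∑ i ∈ range (m + 1), (c i : ℝ) / q ^ (i + 1) ≤
      ∑ i ∈ range (m + 1), (d i : ℝ) / q ^ (i + 1) - 1 / q ^ (m + 1) := by
    have hsame : ∑ i ∈ range m, (c i : ℝ) / q ^ (i + 1) = ∑ i ∈ range m, (d i : ℝ) / q ^ (i + 1) :=
      sum_congr rfl fun k hk => by rw [hpre k (mem_range.mp hk)]
    have hlast : (c m : ℝ) / q ^ (m + 1) ≤ (d m : ℝ) / q ^ (m + 1) - 1 / q ^ (m + 1) := by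
      rw [← sub_div]
      gcongr
      exact le_sub_iff_add_le.mpr (mod_cast hm)
    rw [sum_range_succ, sum_range_succ, hsame]
    linarith
  rw [digitValue_eq_sum_range_add hq hc (m + 1), sub_div]
  linarith [sum_range_le_digitValue hq hd (m + 1)]

end DigitValue

lemma nonpos_of_forall_le_mul {ι : Type*} {f : ι → ℝ} {c : ℝ} (hbdd : BddAbove (Set.range f))
    (hc : c < 1) (h : ∀ i, ∃ j r, 0 ≤ r ∧ r ≤ c ∧ f i ≤ r * f j) (i : ι) : f i ≤ 0 := by
  have : Nonempty ι := ⟨i⟩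
  by_contra! hpos
  have hsup_pos : 0 < ⨆ j, f j := hpos.trans_le (le_ciSup hbdd i)
  have hsup_le : ⨆ j, f j ≤ c * ⨆ j, f j := ciSup_le fun i => by
    obtain ⟨j, r, hr0, hrc, hij⟩ := h i
    calc f i ≤ r * f j := hij
      _ ≤ r * ⨆ j, f j := mul_le_mul_of_nonneg_left (le_ciSup hbdd j) hr0
      _ ≤ c * ⨆ j, f j := mul_le_mul_of_nonneg_right hrc hsup_pos.le
  nlinarith

theorem tail_sum_le (M : ℕ) (q : ℝ) (hq : 1 < q)
    (α : ℕ → ℕ) (hαM : ∀ i, α i ≤ M) (hα1 : ∑' i, (α i : ℝ) / q ^ (i + 1) = 1)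
    (a : ℕ → ℕ) (haM : ∀ i, a i ≤ M)
    (ha : ∀ n, a n < M → LexLe (fun i => a (n + 1 + i)) α) :
    ∀ n, a n < M →
      ∑' i, (a (n + 1 + i) : ℝ) / q ^ (n + 1 + i + 1) ≤ 1 / q ^ (n + 1) := by
  have hq0 : 0 < q := zero_lt_one.trans hq
  have hα : digitValue q α = 1 := hα1
  let f : {n // a n < M} → ℝ := fun n => digitValue q (fun i => a (n + 1 + i)) - 1
  have hbdd : BddAbove (Set.range f) := ⟨digitValue q (fun _ => M) - 1, by
    rintro _ ⟨n, rfl⟩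
    exact sub_le_sub_right (digitValue_mono hq (fun _ => le_rfl) fun i => haM _) 1⟩
  have hstep : ∀ n, ∃ j r, 0 ≤ r ∧ r ≤ q⁻¹ ∧ f n ≤ r * f j := by
    rintro ⟨n, hn⟩
    rcases ha n hn with ⟨m, hpre, hm⟩ | heq
    · refine ⟨⟨n + 1 + m, hm.trans_le (hαM m)⟩, (q ^ (m + 1))⁻¹, by positivity,
        inv_anti₀ hq0 (le_self_pow₀ hq.le m.succ_ne_zero), ?_⟩
      have hdrop := digitValue_sub_le_of_lt_of_eq hq (fun i => haM _) hαM hpre hm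
      simp only [f, add_assoc, hα] at hdrop ⊢
      rwa [inv_mul_eq_div]
    · refine ⟨⟨n, hn⟩, 0, le_rfl, by positivity, ?_⟩
      simp [f, heq, hα]
  intro n hn
  rw [tsum_tail_eq_digitValue_div a (n + 1)]
  gcongr
  linarith [nonpos_of_forall_le_mul hbdd (inv_lt_one_of_one_lt₀ hq) hstep ⟨n, hn⟩]
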